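/- arXiv:cs/0101010 — 7 statements merged into one kernel-verified Lean document; each statement's English description precedes it below -/
import Mathlib

section
/- For any sequence of positive numbers a_1, ..., a_k with sum s, and any real ℓ with k ≤ ℓ ≤ s, we have ∑_{i=1}^k log a_i ≤ ℓ · log(2s/ℓ). -/
/-- For any sequence of positive reals `a₁, …, a_k` with sum `s`, and any real `ℓ` with
`k ≤ ℓ ≤ s`, we have `∑ log₂ aᵢ ≤ ℓ · log₂ (2s/ℓ)`. -/
theorem sum_logb_le_of_card_le_of_le_sum
    (k : ℕ) (a : Fin k → ℝ) (ha : ∀ i, 0 < a i)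
    (s ℓ : ℝ) (hs : s = ∑ i, a i) (hkℓ : (k : ℝ) ≤ ℓ) (hℓs : ℓ ≤ s) :
    ∑ i, Real.logb 2 (a i) ≤ ℓ * Real.logb 2 (2 * s / ℓ) := by
  rcases Nat.eq_zero_or_pos k with hk | hk
  · subst hk
    have hs0 : s = 0 := by simp [hs]
    have hℓ0 : ℓ = 0 := le_antisymm (hs0 ▸ hℓs) (by exact_mod_cast hkℓ)
    simp [hℓ0]
  · have hk1 : (1:ℝ) ≤ (k:ℝ) := by exact_mod_cast hk
    have hℓ0 : 0 < ℓ := lt_of_lt_of_le one_pos (le_trans hk1 hkℓ)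
    have hs0 : 0 < s := lt_of_lt_of_le hℓ0 hℓs
    set t : ℝ := ℓ / (2 * s) with ht
    have ht0 : 0 < t := div_pos hℓ0 (by linarith)
    have key : ∀ i, Real.log (a i) ≤ t * a i - 1 - Real.log t := by
      intro i
      have h1 : Real.log (t * a i) ≤ t * a i - 1 :=
        Real.log_le_sub_one_of_pos (mul_pos ht0 (ha i))
      rw [Real.log_mul (ne_of_gt ht0) (ne_of_gt (ha i))] at h1
      linarith
    have hsum : ∑ i, Real.log (a i) ≤ t * s - k - k * Real.log t := by
      calc ∑ i, Real.log (a i) ≤ ∑ i, (t * a i - 1 - Real.log t) :=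
            Finset.sum_le_sum (fun i _ => key i)
        _ = t * s - k - k * Real.log t := by
            rw [hs, Finset.mul_sum]
            rw [Finset.sum_sub_distrib, Finset.sum_sub_distrib]
            simp
    have hlogt : Real.log t = - Real.log (2 * s / ℓ) := by
      rw [ht, ← Real.log_inv]
      congr 1
      field_simp
    have hts : t * s = ℓ / 2 := by
      rw [ht]; field_simp
    have hL : Real.log 2 ≤ Real.log (2 * s / ℓ) := by
      apply Real.log_le_log (by norm_num)
      rw [le_div_iff₀ hℓ0]; linarith
    have hln2a : (0.6931471803:ℝ) < Real.log 2 := Real.log_two_gt_d9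
    have hln2b : Real.log 2 < 0.6931471808 := Real.log_two_lt_d9
    have hlog2pos : (0:ℝ) < Real.log 2 := by linarith
    have hmul : ((ℓ:ℝ) - k) * Real.log 2 ≤ (ℓ - k) * Real.log (2 * s / ℓ) :=
      mul_le_mul_of_nonneg_left hL (by linarith)
    have hfinal : ∑ i, Real.log (a i) ≤ ℓ * Real.log (2 * s / ℓ) := by
      nlinarith [hsum, hmul]
    calc ∑ i, Real.logb 2 (a i) = (∑ i, Real.log (a i)) / Real.log 2 := by
          simp [Real.logb, Finset.sum_div]
      _ ≤ (ℓ * Real.log (2 * s / ℓ)) / Real.log 2 :=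
          (div_le_div_iff_of_pos_right hlog2pos).mpr hfinal
      _ = ℓ * Real.logb 2 (2 * s / ℓ) := by
          rw [Real.logb]; ring
end

section
/- Let G = (X, Y, E) be a bipartite graph with positive edge weights, where |X| ≤ |Y|. Then there exists a subset E' ⊆ E with |E'| ≤ |X|² such that some maximum weight matching of G uses only edges of E', namely E' can be taken as, for each x ∈ X, the |X| heaviest edges incident to x. -/
open Finset

/-- A matching in a bipartite graph given by a set of edges in `X × Y`:
pairwise non-adjacent edges. -/
def IsMatching {X Y : Type*} (M : Finset (X × Y)) : Prop :=
  ∀ e ∈ M, ∀ f ∈ M, e ≠ f → e.1 ≠ f.1 ∧ e.2 ≠ f.2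

/-- Let `G = (X, Y, E)` be a bipartite graph with positive edge weights and `|X| ≤ |Y|`.
Taking, for each `x ∈ X`, the `|X|` heaviest edges incident to `x` yields a subset
`E' ⊆ E` of at most `|X|²` edges that still contains a maximum weight matching of `G`. -/
theorem exists_small_edge_set_containing_mwm
    {X Y : Type*} [Fintype X] [Fintype Y] [DecidableEq X] [DecidableEq Y]
    (E : Finset (X × Y)) (w : X × Y → ℝ) (hw : ∀ e ∈ E, 0 < w e)
    (hXY : Fintype.card X ≤ Fintype.card Y)
    (S : X → Finset (X × Y))
    (hSsub : ∀ x, S x ⊆ E.filter (fun e => e.1 = x))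
    (hScard : ∀ x, (S x).card = min (Fintype.card X) ((E.filter (fun e => e.1 = x)).card))
    (hSheavy : ∀ x, ∀ e ∈ S x, ∀ f ∈ E.filter (fun e => e.1 = x), f ∉ S x → w f ≤ w e) :
    ∃ E' : Finset (X × Y), E' = Finset.univ.biUnion S ∧ E' ⊆ E ∧
      E'.card ≤ Fintype.card X ^ 2 ∧
      ∃ M ⊆ E', IsMatching M ∧
        ∀ M' ⊆ E, IsMatching M' → ∑ e ∈ M', w e ≤ ∑ e ∈ M, w e := by
  classical
  set E' : Finset (X × Y) := Finset.univ.biUnion S with hE'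
  have hE'subE : E' ⊆ E := by
    intro e he
    rw [hE', mem_biUnion] at he
    obtain ⟨x, -, hx⟩ := he
    exact (mem_filter.mp (hSsub x hx)).1
  have hE'card : E'.card ≤ Fintype.card X ^ 2 := by
    calc E'.card ≤ ∑ x, (S x).card := card_biUnion_le
      _ ≤ ∑ _x : X, Fintype.card X := by
          refine Finset.sum_le_sum fun x _ => ?_
          rw [hScard x]; exact min_le_left _ _
      _ = Fintype.card X ^ 2 := by
          simp [Finset.sum_const, Finset.card_univ, sq]
  -- swap lemma by induction
  have key : ∀ n (M : Finset (X × Y)), (M \ E').card ≤ n → M ⊆ E → IsMatching M →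
      ∃ N, N ⊆ E' ∧ IsMatching N ∧ ∑ e ∈ M, w e ≤ ∑ e ∈ N, w e := by
    intro n
    induction n with
    | zero =>
      intro M hc hME hM
      refine ⟨M, ?_, hM, le_refl _⟩
      intro e he
      by_contra h
      have hmem : e ∈ M \ E' := mem_sdiff.mpr ⟨he, h⟩
      have hemp := card_eq_zero.mp (Nat.le_zero.mp hc)
      rw [hemp] at hmem
      exact absurd hmem (notMem_empty e)
    | succ n ih =>
      intro M hc hME hM
      by_cases hsub : M ⊆ E'
      · exact ⟨M, hsub, hM, le_refl _⟩
      · obtain ⟨e0, he0M, he0E'⟩ : ∃ e ∈ M, e ∉ E' := by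
          by_contra h
          push_neg at h
          exact hsub h
        have he0E : e0 ∈ E := hME he0M
        have he0f : e0 ∈ E.filter (fun e => e.1 = e0.1) := mem_filter.mpr ⟨he0E, rfl⟩
        have hnS : e0 ∉ S e0.1 := by
          intro h
          exact he0E' (mem_biUnion.mpr ⟨e0.1, mem_univ _, h⟩)
        -- S e0.1 has card = |X|
        have hlt : (S e0.1).card < (E.filter (fun e => e.1 = e0.1)).card := by
          refine card_lt_card ?_
          exact ssubset_iff_of_subset (hSsub e0.1) |>.mpr ⟨e0, he0f, hnS⟩
        have hScardX : (S e0.1).card = Fintype.card X := by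
          have := hScard e0.1
          omega
        -- y-coordinates of S e0.1 : card |X|
        have himg : ((S e0.1).image Prod.snd).card = Fintype.card X := by
          rw [card_image_of_injOn, hScardX]
          intro a ha b hb hab
          have ha1 : a.1 = e0.1 := (mem_filter.mp (hSsub e0.1 ha)).2
          have hb1 : b.1 = e0.1 := (mem_filter.mp (hSsub e0.1 hb)).2
          exact Prod.ext (ha1.trans hb1.symm) hab
        have hMcard : M.card ≤ Fintype.card X := by
          have : M.card = (M.image Prod.fst).card := by
            rw [card_image_of_injOn]
            intro a ha b hb hab
            by_contra hne
            exact (hM a ha b hb hne).1 hab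
          rw [this]
          exact le_trans (card_le_card (subset_univ _)) (by simp)
        have hTcard : ((M.erase e0).image Prod.snd).card < Fintype.card X := by
          calc ((M.erase e0).image Prod.snd).card ≤ (M.erase e0).card := card_image_le
            _ < M.card := card_erase_lt_of_mem he0M
            _ ≤ Fintype.card X := hMcard
        obtain ⟨y', hy'S, hy'T⟩ : ∃ y' ∈ (S e0.1).image Prod.snd,
            y' ∉ (M.erase e0).image Prod.snd := by
          by_contra h
          push_neg at h
          have := card_le_card h
          omega
        obtain ⟨f, hfS, hfy⟩ := mem_image.mp hy'S
        have hf1 : f.1 = e0.1 := (mem_filter.mp (hSsub e0.1 hfS)).2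
        have hfE : f ∈ E := (mem_filter.mp (hSsub e0.1 hfS)).1
        have hfE' : f ∈ E' := mem_biUnion.mpr ⟨e0.1, mem_univ _, hfS⟩
        have hfer : f ∉ M.erase e0 := fun h => hy'T (mem_image.mpr ⟨f, h, hfy⟩)
        -- properties of edges in M.erase e0 vs f
        have herase : ∀ g ∈ M.erase e0, g.1 ≠ f.1 ∧ g.2 ≠ f.2 := by
          intro g hg
          obtain ⟨hgne, hgM⟩ := mem_erase.mp hg
          constructor
          · rw [hf1]
            exact (hM g hgM e0 he0M hgne).1
          · intro h
            exact hy'T (mem_image.mpr ⟨g, hg, h.trans hfy⟩)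
        set N' : Finset (X × Y) := insert f (M.erase e0) with hN'
        have hN'E : N' ⊆ E := by
          intro g hg
          rcases mem_insert.mp hg with h | h
          · exact h ▸ hfE
          · exact hME (mem_of_mem_erase h)
        have hN'match : IsMatching N' := by
          intro a ha b hb hab
          rcases mem_insert.mp ha with ha' | ha' <;> rcases mem_insert.mp hb with hb' | hb'
          · exact absurd (ha'.trans hb'.symm) hab
          · subst ha'
            have := herase b hb'
            exact ⟨fun h => this.1 h.symm, fun h => this.2 h.symm⟩
          · subst hb'
            exact herase a ha'
          · exact hM a (mem_of_mem_erase ha') b (mem_of_mem_erase hb') hab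
        have hwle : w e0 ≤ w f := hSheavy e0.1 f hfS e0 he0f hnS
        have hsum : ∑ e ∈ M, w e ≤ ∑ e ∈ N', w e := by
          rw [hN', Finset.sum_insert hfer, ← Finset.add_sum_erase M w he0M]
          linarith
        have hN'card : (N' \ E').card ≤ n := by
          have hsub2 : N' \ E' ⊆ (M \ E').erase e0 := by
            intro a ha
            obtain ⟨haN, haE'⟩ := mem_sdiff.mp ha
            rcases mem_insert.mp haN with h | h
            · exact absurd (h ▸ hfE') haE'
            · exact mem_erase.mpr ⟨(mem_erase.mp h).1, mem_sdiff.mpr ⟨(mem_erase.mp h).2, haE'⟩⟩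
          have he0sd : e0 ∈ M \ E' := mem_sdiff.mpr ⟨he0M, he0E'⟩
          have := card_le_card hsub2
          have := card_erase_lt_of_mem he0sd
          omega
        obtain ⟨N, hNsub, hNmatch, hNsum⟩ := ih N' hN'card hN'E hN'match
        exact ⟨N, hNsub, hNmatch, le_trans hsum hNsum⟩
  -- choose a maximum weight matching among subsets of E
  have hA : ((E.powerset).filter (fun M => IsMatching M)).Nonempty := by
    refine ⟨∅, mem_filter.mpr ⟨mem_powerset.mpr (empty_subset _), ?_⟩⟩
    intro e he
    simp at he
  obtain ⟨M₀, hM₀mem, hM₀max⟩ := Finset.exists_max_image _ (fun M => ∑ e ∈ M, w e) hA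
  obtain ⟨hM₀E, hM₀match⟩ := mem_filter.mp hM₀mem
  rw [mem_powerset] at hM₀E
  obtain ⟨N, hNsub, hNmatch, hNsum⟩ :=
    key (M₀ \ E').card M₀ le_rfl hM₀E hM₀match
  refine ⟨E', rfl, hE'subE, hE'card, N, hNsub, hNmatch, ?_⟩
  intro M' hM'E hM'match
  have : M' ∈ (E.powerset).filter (fun M => IsMatching M) :=
    mem_filter.mpr ⟨mem_powerset.mpr hM'E, hM'match⟩
  exact le_trans (hM₀max M' this) hNsum
end

section
/- Let G = (X, Y, E) be a weighted bipartite graph, let Y' ⊆ Y, and let M' be a maximum weight matching of the subgraph G(Y') induced by all edges incident to Y'. Let Y_{M'} = { y ∈ Y' : y is matched by M' }. Then for any Y'' ⊆ Y disjoint from Y', every maximum weight matching of G(Y_{M'} ∪ Y'') is also a maximum weight matching of G(Y' ∪ Y''). -/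
open Finset

/-- One step of an alternating walk in `M' ∪ N`: from an `N`-edge to the `M'`-edge
sharing its `X`-endpoint, or from an `M'`-edge to the `N`-edge sharing its
`Y`-endpoint. -/
def AltStep {X Y : Type*} (M' N : Finset (X × Y)) : X × Y → X × Y → Prop :=
  fun e f => (e ∈ N ∧ f ∈ M' ∧ f.1 = e.1) ∨ (e ∈ M' ∧ f ∈ N ∧ f.2 = e.2)

/-- An edge is in the "swap region" if it is alternately reachable from an `N`-edge
whose `Y`-endpoint lies in `Y'` but is unmatched by `M'`. -/
def InSwap {X Y : Type*} (YM Y' : Finset Y) (M' N : Finset (X × Y)) (f : X × Y) : Prop :=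
  ∃ b, (b ∈ N ∧ b.2 ∈ Y' ∧ b.2 ∉ YM) ∧ Relation.ReflTransGen (AltStep M' N) b f

/-- Exchange lemma: any matching `N` in `G(Y' ∪ Y'')` together with a matching `M'`
in `G(YM)` (with `YM ⊆ Y'`) can be redistributed into a matching `C` in `G(Y')` and a
matching `D` in `G(YM ∪ Y'')` of the same total weight. -/
lemma mwm_exchange_aux {X Y : Type*} [DecidableEq X] [DecidableEq Y]
    (w : X × Y → ℝ) (Y' YM Y'' : Finset Y) (hYMY' : YM ⊆ Y')
    (M' N : Finset (X × Y)) (hM' : IsMatching M') (hN : IsMatching N)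
    (hM'Y : ∀ e ∈ M', e.2 ∈ YM)
    (hNY : ∀ e ∈ N, e.2 ∈ Y' ∪ Y'') :
    ∃ C D : Finset (X × Y), C ⊆ M' ∪ N ∧ D ⊆ M' ∪ N ∧
      IsMatching C ∧ IsMatching D ∧
      (∀ e ∈ C, e.2 ∈ Y') ∧ (∀ e ∈ D, e.2 ∈ YM ∪ Y'') ∧
      ∑ e ∈ C, w e + ∑ e ∈ D, w e = ∑ e ∈ M', w e + ∑ e ∈ N, w e := by
  classical
  -- No edge shared by `N` and `M'` is in the swap region.
  have hshared : ∀ f, InSwap YM Y' M' N f → f ∈ N → f ∈ M' → False := by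
    rintro f ⟨b, hb, hchain⟩
    induction hchain with
    | refl => intro _ hbM; exact hb.2.2 (hM'Y b hbM)
    | @tail c d hbc hcd ih =>
      intro hdN hdM
      rcases hcd with ⟨hcN, hdM', h1⟩ | ⟨hcM, hdN', h2⟩
      · by_cases hcd : c = d
        · exact ih (hcd ▸ hdN) (hcd ▸ hdM)
        · exact (hN c hcN d hdN hcd).1 h1.symm
      · by_cases hcd : c = d
        · exact ih (hcd ▸ hdN) (hcd ▸ hdM)
        · exact (hM' c hcM d hdM hcd).2 h2.symm
  -- Structure of reachable `M'`-edges: reached through their `X`-endpoint from an `N`-edge.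
  have hM'step : ∀ f, f ∈ M' → InSwap YM Y' M' N f →
      ∃ e, e ∈ N ∧ InSwap YM Y' M' N e ∧ e.1 = f.1 := by
    rintro f hfM ⟨b, hb, hchain⟩
    rcases hchain.cases_tail with rfl | ⟨c, hbc, hcf⟩
    · exact absurd (hM'Y _ hfM) hb.2.2
    · rcases hcf with ⟨hcN, _, h1⟩ | ⟨hcM, hfN, h2⟩
      · exact ⟨c, hcN, ⟨b, hb, hbc⟩, h1.symm⟩
      · exact absurd hfM (fun h => hshared f ⟨b, hb, hchain⟩ hfN h)
  -- Structure of reachable non-seed `N`-edges: reached through their `Y`-endpoint.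
  have hNstep : ∀ f, f ∈ N → ¬(f.2 ∈ Y' ∧ f.2 ∉ YM) → InSwap YM Y' M' N f →
      ∃ e, e ∈ M' ∧ InSwap YM Y' M' N e ∧ e.2 = f.2 := by
    rintro f hfN hnb ⟨b, hb, hchain⟩
    rcases hchain.cases_tail with rfl | ⟨c, hbc, hcf⟩
    · exact absurd ⟨hb.2.1, hb.2.2⟩ hnb
    · rcases hcf with ⟨hcN, hfM, h1⟩ | ⟨hcM, _, h2⟩
      · exact absurd hfM (fun h => hshared f ⟨b, hb, hchain⟩ hfN h)
      · exact ⟨c, hcM, ⟨b, hb, hbc⟩, h2.symm⟩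
  set SN : Finset (X × Y) := N.filter (InSwap YM Y' M' N) with hSN
  set SM : Finset (X × Y) := M'.filter (InSwap YM Y' M' N) with hSM
  have hSNN : SN ⊆ N := filter_subset _ _
  have hSMM : SM ⊆ M' := filter_subset _ _
  -- `Y`-endpoints of swap-region `N`-edges lie in `Y'`.
  have hSNY : ∀ f ∈ SN, f.2 ∈ Y' := by
    intro f hf
    rw [hSN, mem_filter] at hf
    by_cases hb : f.2 ∈ Y' ∧ f.2 ∉ YM
    · exact hb.1
    · obtain ⟨e, heM, _, he2⟩ := hNstep f hf.1 hb hf.2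
      exact hYMY' (he2 ▸ hM'Y e heM)
  -- Cross non-adjacency for C.
  have hCross : ∀ a ∈ SN, ∀ b ∈ M', b ∉ SM → a.1 ≠ b.1 ∧ a.2 ≠ b.2 := by
    intro a ha b hbM hbS
    rw [hSN, mem_filter] at ha
    have hbnS : ¬ InSwap YM Y' M' N b := fun h => hbS (mem_filter.2 ⟨hbM, h⟩)
    constructor
    · intro h1
      obtain ⟨c, hc, hchain⟩ := ha.2
      exact hbnS ⟨c, hc, hchain.tail (Or.inl ⟨ha.1, hbM, h1.symm⟩)⟩
    · intro h2
      by_cases hb : a.2 ∈ Y' ∧ a.2 ∉ YM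
      · exact hb.2 (h2 ▸ hM'Y b hbM)
      · obtain ⟨e, heM, heS, he2⟩ := hNstep a ha.1 hb ha.2
        by_cases hef : e = b
        · exact hbnS (hef ▸ heS)
        · exact (hM' e heM b hbM hef).2 (he2.trans h2)
  -- Cross non-adjacency for D.
  have hCrossD : ∀ a ∈ SM, ∀ b ∈ N, b ∉ SN → a.1 ≠ b.1 ∧ a.2 ≠ b.2 := by
    intro a ha b hbN hbS
    rw [hSM, mem_filter] at ha
    have hbnS : ¬ InSwap YM Y' M' N b := fun h => hbS (mem_filter.2 ⟨hbN, h⟩)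
    constructor
    · intro h1
      obtain ⟨e, heN, heS, he1⟩ := hM'step a ha.1 ha.2
      by_cases hef : e = b
      · exact hbnS (hef ▸ heS)
      · exact (hN e heN b hbN hef).1 (he1.trans h1)
    · intro h2
      obtain ⟨c, hc, hchain⟩ := ha.2
      exact hbnS ⟨c, hc, hchain.tail (Or.inr ⟨ha.1, hbN, h2.symm⟩)⟩
  have hdisjC : Disjoint SN (M' \ SM) := by
    rw [Finset.disjoint_left]
    intro a haSN haMS
    rw [hSN, mem_filter] at haSN
    exact hshared a haSN.2 haSN.1 (mem_sdiff.1 haMS).1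
  have hdisjD : Disjoint SM (N \ SN) := by
    rw [Finset.disjoint_left]
    intro a haSM haNS
    rw [hSM, mem_filter] at haSM
    rcases mem_sdiff.1 haNS with ⟨haN, hanS⟩
    exact hanS (mem_filter.2 ⟨haN, haSM.2⟩)
  refine ⟨SN ∪ (M' \ SM), SM ∪ (N \ SN), ?_, ?_, ?_, ?_, ?_, ?_, ?_⟩
  · exact union_subset (hSNN.trans subset_union_right)
      ((sdiff_subset).trans subset_union_left)
  · exact union_subset (hSMM.trans subset_union_left)
      ((sdiff_subset).trans subset_union_right)
  · -- C is a matching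
    intro e he f hf hef
    rcases mem_union.1 he with heS | heM <;> rcases mem_union.1 hf with hfS | hfM
    · exact hN e (hSNN heS) f (hSNN hfS) hef
    · exact hCross e heS f (mem_sdiff.1 hfM).1 (mem_sdiff.1 hfM).2
    · obtain ⟨h1, h2⟩ := hCross f hfS e (mem_sdiff.1 heM).1 (mem_sdiff.1 heM).2
      exact ⟨h1.symm, h2.symm⟩
    · exact hM' e (mem_sdiff.1 heM).1 f (mem_sdiff.1 hfM).1 hef
  · -- D is a matching
    intro e he f hf hef
    rcases mem_union.1 he with heS | heN <;> rcases mem_union.1 hf with hfS | hfN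
    · exact hM' e (hSMM heS) f (hSMM hfS) hef
    · exact hCrossD e heS f (mem_sdiff.1 hfN).1 (mem_sdiff.1 hfN).2
    · obtain ⟨h1, h2⟩ := hCrossD f hfS e (mem_sdiff.1 heN).1 (mem_sdiff.1 heN).2
      exact ⟨h1.symm, h2.symm⟩
    · exact hN e (mem_sdiff.1 heN).1 f (mem_sdiff.1 hfN).1 hef
  · -- C-edges end in Y'
    intro e he
    rcases mem_union.1 he with heS | heM
    · exact hSNY e heS
    · exact hYMY' (hM'Y e (mem_sdiff.1 heM).1)
  · -- D-edges end in YM ∪ Y''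
    intro e he
    rcases mem_union.1 he with heS | heN
    · exact mem_union.2 (Or.inl (hM'Y e (hSMM heS)))
    · rcases mem_sdiff.1 heN with ⟨heN', henS⟩
      rcases mem_union.1 (hNY e heN') with hY1 | hY2
      · by_cases hYM : e.2 ∈ YM
        · exact mem_union.2 (Or.inl hYM)
        · exact absurd (mem_filter.2 ⟨heN', ⟨e, ⟨heN', hY1, hYM⟩,
            Relation.ReflTransGen.refl⟩⟩) henS
      · exact mem_union.2 (Or.inr hY2)
  · -- weights
    rw [sum_union hdisjC, sum_union hdisjD, sum_sdiff_eq_sub hSMM, sum_sdiff_eq_sub hSNN]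
    ring

/-- Let `G = (X,Y,E)` be a weighted bipartite graph, `Y' ⊆ Y`, and `M'` a maximum weight
matching of the subgraph `G(Y')` induced by edges incident to `Y'`.  Let `Y_{M'}` be the
set of `Y`-nodes matched by `M'`.  Then for any `Y''` disjoint from `Y'`, every maximum
weight matching of `G(Y_{M'} ∪ Y'')` is also a maximum weight matching of `G(Y' ∪ Y'')`. -/
theorem mwm_of_matched_union_is_mwm_of_union
    {X Y : Type*} [DecidableEq X] [DecidableEq Y]
    (E : Finset (X × Y)) (w : X × Y → ℝ) (hw : ∀ e ∈ E, 0 ≤ w e)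
    (Y' Y'' : Finset Y) (hY' : Disjoint Y' Y'')
    (M' : Finset (X × Y))
    (hM'sub : M' ⊆ E.filter (fun e => e.2 ∈ Y'))
    (hM'match : IsMatching M')
    (hM'max : ∀ N ⊆ E.filter (fun e => e.2 ∈ Y'), IsMatching N →
      ∑ e ∈ N, w e ≤ ∑ e ∈ M', w e)
    (YM : Finset Y) (hYM : YM = M'.image Prod.snd)
    (M : Finset (X × Y))
    (hMsub : M ⊆ E.filter (fun e => e.2 ∈ YM ∪ Y''))
    (hMmatch : IsMatching M)
    (hMmax : ∀ N ⊆ E.filter (fun e => e.2 ∈ YM ∪ Y''), IsMatching N →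
      ∑ e ∈ N, w e ≤ ∑ e ∈ M, w e) :
    M ⊆ E.filter (fun e => e.2 ∈ Y' ∪ Y'') ∧
    ∀ N ⊆ E.filter (fun e => e.2 ∈ Y' ∪ Y''), IsMatching N →
      ∑ e ∈ N, w e ≤ ∑ e ∈ M, w e := by
  classical
  have hM'E : M' ⊆ E := fun e he => (mem_filter.1 (hM'sub he)).1
  have hYMY' : YM ⊆ Y' := by
    rw [hYM]
    intro y hy
    obtain ⟨e, he, rfl⟩ := mem_image.1 hy
    exact (mem_filter.1 (hM'sub he)).2
  have hM'Y : ∀ e ∈ M', e.2 ∈ YM := by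
    intro e he
    rw [hYM]
    exact mem_image_of_mem _ he
  constructor
  · intro e he
    rcases mem_filter.1 (hMsub he) with ⟨heE, heY⟩
    refine mem_filter.2 ⟨heE, ?_⟩
    rcases mem_union.1 heY with h | h
    · exact mem_union.2 (Or.inl (hYMY' h))
    · exact mem_union.2 (Or.inr h)
  · intro N hNsub hNmatch
    have hNE : N ⊆ E := fun e he => (mem_filter.1 (hNsub he)).1
    have hNY : ∀ e ∈ N, e.2 ∈ Y' ∪ Y'' := fun e he => (mem_filter.1 (hNsub he)).2
    obtain ⟨C, D, hCsub, hDsub, hCm, hDm, hCY, hDY, hsum⟩ :=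
      mwm_exchange_aux w Y' YM Y'' hYMY' M' N hM'match hNmatch hM'Y hNY
    have hCE : C ⊆ E := hCsub.trans (union_subset hM'E hNE)
    have hDE : D ⊆ E := hDsub.trans (union_subset hM'E hNE)
    have hCle : ∑ e ∈ C, w e ≤ ∑ e ∈ M', w e :=
      hM'max C (fun e he => mem_filter.2 ⟨hCE he, hCY e he⟩) hCm
    have hDle : ∑ e ∈ D, w e ≤ ∑ e ∈ M, w e :=
      hMmax D (fun e he => mem_filter.2 ⟨hDE he, hDY e he⟩) hDm
    linarith
end

section
/- Let G be a bipartite graph with positive edge weights, x a node of G, M a maximum weight matching of G, and M_x a maximum weight matching of G − {x}. Consider the symmetric difference M Δ M_x, which decomposes into alternating paths and cycles. Then every alternating path or cycle in M Δ M_x that does not contain x has equal total M-weight and M_x-weight (i.e., it cannot improve M_x); consequently, M_x can be transformed into a maximum weight matching of G by augmenting along the single alternating path in M Δ M_x starting at x (if any). -/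
open Finset

/-- A set `C` of edges is vertex-closed in `S` (a union of connected components of the
graph with edge set `S`) if every edge of `S` sharing an endpoint with an edge of `C`
is in `C`. -/
def VertexClosed {X Y : Type*} (S C : Finset (X × Y)) : Prop :=
  ∀ e ∈ C, ∀ f ∈ S, (e.1 = f.1 ∨ e.2 = f.2) → f ∈ C

/-- Swapping a matching `B` along a vertex-closed part `C` of the symmetric
difference of two matchings `A`, `B` yields a matching. -/
lemma swap_matching {X Y : Type*} [DecidableEq X] [DecidableEq Y]
    {A B S C : Finset (X × Y)} (hA : IsMatching A) (hB : IsMatching B)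
    (hS : S = (A ∪ B) \ (A ∩ B)) (hC : VertexClosed S C) :
    IsMatching ((B \ C) ∪ (A ∩ C)) := by
  have key : ∀ e ∈ B \ C, ∀ f ∈ A ∩ C, e ≠ f → e.1 ≠ f.1 ∧ e.2 ≠ f.2 := by
    intro e he f hf hef
    rw [Finset.mem_sdiff] at he
    rw [Finset.mem_inter] at hf
    by_cases heA : e ∈ A
    · exact hA e heA f hf.1 hef
    · have heS : e ∈ S := by
        rw [hS, Finset.mem_sdiff]
        exact ⟨Finset.mem_union_right _ he.1, fun h => heA (Finset.mem_inter.mp h).1⟩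
      have hclose : ¬ (f.1 = e.1 ∨ f.2 = e.2) := by
        intro hor
        exact he.2 (hC f hf.2 e heS hor)
      exact ⟨fun h => hclose (Or.inl h.symm), fun h => hclose (Or.inr h.symm)⟩
  intro e he f hf hef
  rcases Finset.mem_union.mp he with he' | he' <;> rcases Finset.mem_union.mp hf with hf' | hf'
  · exact hB e (Finset.mem_sdiff.mp he').1 f (Finset.mem_sdiff.mp hf').1 hef
  · exact key e he' f hf' hef
  · obtain ⟨h1, h2⟩ := key f hf' e he' hef.symm
    exact ⟨h1.symm, h2.symm⟩
  · exact hA e (Finset.mem_inter.mp he').1 f (Finset.mem_inter.mp hf').1 hef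

lemma sum_split {X Y : Type*} [DecidableEq X] [DecidableEq Y]
    (w : X × Y → ℝ) (B C : Finset (X × Y)) :
    ∑ e ∈ B, w e = ∑ e ∈ B \ C, w e + ∑ e ∈ B ∩ C, w e := by
  have h := Finset.sum_union (f := w) (s₁ := B \ C) (s₂ := B ∩ C)
    (Finset.sdiff_disjoint.mono_right (Finset.inter_subset_right : B ∩ C ⊆ C))
  rw [Finset.sdiff_union_inter] at h
  exact h

lemma sdiff_decomp {X Y : Type*} [DecidableEq X] [DecidableEq Y]
    {A B S C : Finset (X × Y)} (hS : S = (A ∪ B) \ (A ∩ B)) (hCS : C ⊆ S) :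
    A \ C = (A ∩ B) ∪ (A ∩ (S \ C)) := by
  ext e
  simp only [Finset.mem_sdiff, Finset.mem_union, Finset.mem_inter]
  constructor
  · rintro ⟨heM, heC⟩
    by_cases heB : e ∈ B
    · exact Or.inl ⟨heM, heB⟩
    · refine Or.inr ⟨heM, ?_, heC⟩
      rw [hS, Finset.mem_sdiff]
      exact ⟨Finset.mem_union_left _ heM, fun h => heB (Finset.mem_inter.mp h).2⟩
  · rintro (⟨heM, heB⟩ | ⟨heM, heS, heC⟩)
    · refine ⟨heM, fun heC => ?_⟩
      have := hCS heC
      rw [hS, Finset.mem_sdiff] at this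
      exact this.2 (Finset.mem_inter.mpr ⟨heM, heB⟩)
    · exact ⟨heM, heC⟩

/-- Let `G` be a bipartite graph with positive edge weights, `x` a node of `G`, `M` a
maximum weight matching of `G` and `Mx` a maximum weight matching of `G − {x}`.
The symmetric difference `M Δ Mx` decomposes into alternating paths and cycles
(unions of components = vertex-closed subsets).  Then:
(1) every union of components avoiding `x` has equal total `M`-weight and `Mx`-weight;
(2) augmenting `Mx` along the components containing the edges at `x` (replacing
`Mx ∩ C` by `M ∩ C`) yields a maximum weight matching of `G`. -/
theorem symmdiff_components_avoiding_x_have_equal_weight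
    {X Y : Type*} [DecidableEq X] [DecidableEq Y]
    (E : Finset (X × Y)) (w : X × Y → ℝ) (hw : ∀ e ∈ E, 0 < w e)
    (x : X)
    (M : Finset (X × Y)) (hMsub : M ⊆ E) (hMmatch : IsMatching M)
    (hMmax : ∀ N ⊆ E, IsMatching N → ∑ e ∈ N, w e ≤ ∑ e ∈ M, w e)
    (Mx : Finset (X × Y)) (hMxsub : Mx ⊆ E.filter (fun e => e.1 ≠ x))
    (hMxmatch : IsMatching Mx)
    (hMxmax : ∀ N ⊆ E.filter (fun e => e.1 ≠ x), IsMatching N →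
      ∑ e ∈ N, w e ≤ ∑ e ∈ Mx, w e)
    (S : Finset (X × Y)) (hS : S = (M ∪ Mx) \ (M ∩ Mx)) :
    (∀ C ⊆ S, VertexClosed S C → (∀ e ∈ C, e.1 ≠ x) →
        ∑ e ∈ C ∩ M, w e = ∑ e ∈ C ∩ Mx, w e) ∧
    (∀ C ⊆ S, VertexClosed S C → (∀ e ∈ S, e.1 = x → e ∈ C) →
        IsMatching ((Mx \ C) ∪ (M ∩ C)) ∧ ((Mx \ C) ∪ (M ∩ C)) ⊆ E ∧
        ∑ e ∈ (Mx \ C) ∪ (M ∩ C), w e = ∑ e ∈ M, w e) := by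
  have hS' : S = (Mx ∪ M) \ (Mx ∩ M) := by rw [hS, Finset.union_comm, Finset.inter_comm]
  have hMxE : Mx ⊆ E := hMxsub.trans (Finset.filter_subset _ _)
  -- Part 1
  have part1 : ∀ C ⊆ S, VertexClosed S C → (∀ e ∈ C, e.1 ≠ x) →
      ∑ e ∈ C ∩ M, w e = ∑ e ∈ C ∩ Mx, w e := by
    intro C hCS hVC hx
    -- swap in Mx
    have hN1m : IsMatching ((Mx \ C) ∪ (M ∩ C)) := swap_matching hMmatch hMxmatch hS hVC
    have hN1sub : ((Mx \ C) ∪ (M ∩ C)) ⊆ E.filter (fun e => e.1 ≠ x) := by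
      intro e he
      rcases Finset.mem_union.mp he with h | h
      · exact hMxsub (Finset.mem_sdiff.mp h).1
      · obtain ⟨h1, h2⟩ := Finset.mem_inter.mp h
        exact Finset.mem_filter.mpr ⟨hMsub h1, hx e h2⟩
    have h1 := hMxmax _ hN1sub hN1m
    have hd1 : Disjoint (Mx \ C) (M ∩ C) :=
      Finset.sdiff_disjoint.mono_right Finset.inter_subset_right
    rw [Finset.sum_union hd1] at h1
    have hMx' := sum_split w Mx C
    -- swap in M
    have hN2m : IsMatching ((M \ C) ∪ (Mx ∩ C)) := swap_matching hMxmatch hMmatch hS' hVC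
    have hN2sub : ((M \ C) ∪ (Mx ∩ C)) ⊆ E := by
      intro e he
      rcases Finset.mem_union.mp he with h | h
      · exact hMsub (Finset.mem_sdiff.mp h).1
      · exact hMxE (Finset.mem_inter.mp h).1
    have h2 := hMmax _ hN2sub hN2m
    have hd2 : Disjoint (M \ C) (Mx ∩ C) :=
      Finset.sdiff_disjoint.mono_right Finset.inter_subset_right
    rw [Finset.sum_union hd2] at h2
    have hM' := sum_split w M C
    rw [Finset.inter_comm C M, Finset.inter_comm C Mx]
    linarith
  refine ⟨part1, ?_⟩
  -- Part 2
  intro C hCS hVC hxC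
  have hmatch : IsMatching ((Mx \ C) ∪ (M ∩ C)) := swap_matching hMmatch hMxmatch hS hVC
  have hsub : ((Mx \ C) ∪ (M ∩ C)) ⊆ E := by
    intro e he
    rcases Finset.mem_union.mp he with h | h
    · exact hMxE (Finset.mem_sdiff.mp h).1
    · exact hMsub (Finset.mem_inter.mp h).1
  refine ⟨hmatch, hsub, ?_⟩
  -- complement component
  set C' := S \ C with hC'
  have hC'S : C' ⊆ S := Finset.sdiff_subset
  have hC'VC : VertexClosed S C' := by
    intro e he f hf hor
    obtain ⟨heS, heC⟩ := Finset.mem_sdiff.mp he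
    refine Finset.mem_sdiff.mpr ⟨hf, fun hfC => heC (hVC f hfC e heS ?_)⟩
    exact hor.imp Eq.symm Eq.symm
  have hC'x : ∀ e ∈ C', e.1 ≠ x := by
    intro e he hex
    obtain ⟨heS, heC⟩ := Finset.mem_sdiff.mp he
    exact heC (hxC e heS hex)
  have heq := part1 C' hC'S hC'VC hC'x
  -- decompose M \ C and Mx \ C
  have hdS : Disjoint S (M ∩ Mx) := by rw [hS]; exact Finset.sdiff_disjoint
  have hdecM : M \ C = (M ∩ Mx) ∪ (M ∩ C') := sdiff_decomp hS hCS
  have hdecMx : Mx \ C = (Mx ∩ M) ∪ (Mx ∩ C') := sdiff_decomp hS' hCS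
  have hd3 : Disjoint (M ∩ Mx) (M ∩ C') :=
    (hdS.mono_left ((Finset.inter_subset_right : M ∩ C' ⊆ C').trans hC'S)).symm
  have hd4 : Disjoint (Mx ∩ M) (Mx ∩ C') := by
    rw [Finset.inter_comm Mx M]
    exact (hdS.mono_left ((Finset.inter_subset_right : Mx ∩ C' ⊆ C').trans hC'S)).symm
  have hsumM : ∑ e ∈ M \ C, w e = ∑ e ∈ M ∩ Mx, w e + ∑ e ∈ M ∩ C', w e := by
    rw [hdecM, Finset.sum_union hd3]
  have hsumMx : ∑ e ∈ Mx \ C, w e = ∑ e ∈ Mx ∩ M, w e + ∑ e ∈ Mx ∩ C', w e := by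
    rw [hdecMx, Finset.sum_union hd4]
  have hd1 : Disjoint (Mx \ C) (M ∩ C) :=
    Finset.sdiff_disjoint.mono_right Finset.inter_subset_right
  rw [Finset.sum_union hd1]
  have hM' := sum_split w M C
  have hcomm : ∑ e ∈ Mx ∩ M, w e = ∑ e ∈ M ∩ Mx, w e := by rw [Finset.inter_comm]
  have heq' : ∑ e ∈ M ∩ C', w e = ∑ e ∈ Mx ∩ C', w e := by
    rw [Finset.inter_comm M C', Finset.inter_comm Mx C']; exact heq
  linarith
end

section
/- Let T be a rooted tree with root r, and let w : T → ℝ₊ be a weight function satisfying w(u) ≥ ∑_{v child of u} w(v) for every node u. For a node u with at least two children, define secw(u) as the second largest value of w(v) over the children v of u. Then for any x > 0, the number of nodes u of T with secw(u) > x is less than w(r)/x. -/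
set_option linter.unusedSectionVars false


open Finset

/-- A finite rooted tree on vertex set `V`, given by its root and parent function. -/
structure RTree (V : Type*) where
  root : V
  parent : V → V
  parent_root : parent root = root
  reaches_root : ∀ v, ∃ n, parent^[n] v = root

variable {V : Type*} [Fintype V] [DecidableEq V]

open scoped Classical in
/-- The set of children of `u`. -/
noncomputable def RTree.children (T : RTree V) (u : V) : Finset V :=
  Finset.univ.filter fun v => T.parent v = u ∧ v ≠ u

open scoped Classical in
/-- The subtree rooted at `u`: all descendants of `u` (including `u`). -/
noncomputable def RTree.subtree (T : RTree V) (u : V) : Finset V :=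
  Finset.univ.filter fun v => ∃ n, T.parent^[n] v = u

open scoped Classical in
/-- The second largest weight (counting multiplicity) among the children of `u`:
the maximum of `min (w v₁) (w v₂)` over distinct children `v₁ ≠ v₂` (and `0` if `u`
has fewer than two children). -/
noncomputable def RTree.secw (T : RTree V) (w : V → ℝ) (u : V) : ℝ :=
  if h : (((T.children u) ×ˢ (T.children u)).filter fun p => p.1 ≠ p.2).Nonempty then
    (((T.children u) ×ˢ (T.children u)).filter fun p => p.1 ≠ p.2).sup' h
      fun p => min (w p.1) (w p.2)
  else 0

open scoped Classical

lemma RTree.iterate_root (T : RTree V) (n : ℕ) : T.parent^[n] T.root = T.root := by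
  induction n with
  | zero => rfl
  | succ n ih => rw [Function.iterate_succ_apply', ih, T.parent_root]

lemma RTree.eq_root_of_cycle (T : RTree V) {u : V} {k : ℕ} (hk : 0 < k)
    (h : T.parent^[k] u = u) : u = T.root := by
  obtain ⟨n, hn⟩ := T.reaches_root u
  have hcyc : ∀ m, T.parent^[m * k] u = u := by
    intro m
    induction m with
    | zero => simp
    | succ m ih => rw [Nat.succ_mul, Function.iterate_add_apply, h, ih]
  have h2 : T.parent^[n * k] u = T.parent^[n * k - n] (T.parent^[n] u) := by
    rw [← Function.iterate_add_apply]
    congr 1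
    have : n ≤ n * k := Nat.le_mul_of_pos_right n hk
    omega
  rw [hcyc n, hn, T.iterate_root] at h2
  exact h2

lemma RTree.mem_subtree (T : RTree V) {u v : V} :
    v ∈ T.subtree u ↔ ∃ n, T.parent^[n] v = u := by
  simp [RTree.subtree]

lemma RTree.self_mem_subtree (T : RTree V) (u : V) : u ∈ T.subtree u :=
  T.mem_subtree.mpr ⟨0, rfl⟩

lemma RTree.mem_children (T : RTree V) {u v : V} :
    v ∈ T.children u ↔ T.parent v = u ∧ v ≠ u := by
  simp [RTree.children]

lemma RTree.subtree_subset (T : RTree V) {u c : V} (hc : c ∈ T.children u) :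
    T.subtree c ⊆ T.subtree u := by
  intro v hv
  obtain ⟨n, hn⟩ := T.mem_subtree.mp hv
  exact T.mem_subtree.mpr ⟨n + 1, by
    rw [Function.iterate_succ_apply', hn, (T.mem_children.mp hc).1]⟩

lemma RTree.notMem_subtree_child (T : RTree V) {u c : V} (hc : c ∈ T.children u) :
    u ∉ T.subtree c := by
  intro hu
  obtain ⟨n, hn⟩ := T.mem_subtree.mp hu
  obtain ⟨hp, hne⟩ := T.mem_children.mp hc
  have hcyc : T.parent^[n + 1] u = u := by
    rw [Function.iterate_succ_apply', hn, hp]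
  have hroot := T.eq_root_of_cycle (Nat.succ_pos n) hcyc
  apply hne
  rw [← hn, hroot, T.iterate_root]

lemma RTree.children_aux (T : RTree V) {u c₁ c₂ : V} {k : ℕ}
    (h1 : c₁ ∈ T.children u) (h2 : c₂ ∈ T.children u) (hne : c₁ ≠ c₂)
    (hk : T.parent^[k] c₁ = c₂) : False := by
  obtain ⟨hp1, hne1⟩ := T.mem_children.mp h1
  obtain ⟨hp2, hne2⟩ := T.mem_children.mp h2
  rcases Nat.eq_zero_or_pos k with rfl | hkpos
  · exact hne hk
  · have h3 : T.parent^[k - 1] u = c₂ := by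
      rw [← hp1, ← Function.iterate_succ_apply, Nat.succ_eq_add_one,
        Nat.sub_add_cancel hkpos, hk]
    have hcyc : T.parent^[k] u = u := by
      have : k = (k - 1) + 1 := by omega
      rw [this, Function.iterate_succ_apply', h3, hp2]
    have hroot := T.eq_root_of_cycle hkpos hcyc
    apply hne2
    rw [← h3, hroot, T.iterate_root]

lemma RTree.subtree_disjoint (T : RTree V) {u c₁ c₂ : V}
    (h1 : c₁ ∈ T.children u) (h2 : c₂ ∈ T.children u) (hne : c₁ ≠ c₂) :
    Disjoint (T.subtree c₁) (T.subtree c₂) := by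
  rw [Finset.disjoint_left]
  intro v hv1 hv2
  obtain ⟨n, hn⟩ := T.mem_subtree.mp hv1
  obtain ⟨m, hm⟩ := T.mem_subtree.mp hv2
  rcases le_total n m with hle | hle
  · refine T.children_aux h1 h2 hne (k := m - n) ?_
    rw [← hn, ← Function.iterate_add_apply]
    have : m - n + n = m := by omega
    rw [this, hm]
  · refine T.children_aux h2 h1 hne.symm (k := n - m) ?_
    rw [← hm, ← Function.iterate_add_apply]
    have : n - m + m = n := by omega
    rw [this, hn]

lemma RTree.subtree_eq (T : RTree V) (u : V) :
    T.subtree u = insert u ((T.children u).biUnion T.subtree) := by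
  ext v
  simp only [mem_insert, mem_biUnion]
  constructor
  · intro hv
    by_cases hvu : v = u
    · exact Or.inl hvu
    · right
      have hex : ∃ n, T.parent^[n] v = u := T.mem_subtree.mp hv
      set N := Nat.find hex with hN
      have hNspec : T.parent^[N] v = u := Nat.find_spec hex
      have hNpos : 0 < N := by
        rcases Nat.eq_zero_or_pos N with h0 | h
        · exact absurd (by rw [h0] at hNspec; exact hNspec) hvu
        · exact h
      refine ⟨T.parent^[N - 1] v, ?_, ?_⟩
      · refine T.mem_children.mpr ⟨?_, ?_⟩
        · have hNs : T.parent^[N - 1 + 1] v = u := by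
            rw [Nat.sub_add_cancel hNpos]; exact hNspec
          rw [Function.iterate_succ_apply'] at hNs
          exact hNs
        · intro heq
          have := Nat.find_min hex (m := N - 1) (by omega)
          exact this heq
      · exact T.mem_subtree.mpr ⟨N - 1, rfl⟩
  · rintro (rfl | ⟨c, hc, hvc⟩)
    · exact T.self_mem_subtree v
    · exact T.subtree_subset hc hvc

lemma RTree.exists_two_heavy (T : RTree V) (w : V → ℝ) {u : V} {x : ℝ} (hx : 0 < x)
    (h : x < T.secw w u) :
    ∃ c₁ ∈ T.children u, ∃ c₂ ∈ T.children u, c₁ ≠ c₂ ∧ x < w c₁ ∧ x < w c₂ := by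
  unfold RTree.secw at h
  split_ifs at h with hne
  · rw [Finset.lt_sup'_iff] at h
    obtain ⟨p, hp, hlt⟩ := h
    rw [Finset.mem_filter, Finset.mem_product] at hp
    exact ⟨p.1, hp.1.1, p.2, hp.1.2, hp.2, lt_of_lt_of_le hlt (min_le_left _ _),
      lt_of_lt_of_le hlt (min_le_right _ _)⟩
  · exact absurd (hx.trans h) (lt_irrefl 0)

lemma RTree.count_eq (T : RTree V) (w : V → ℝ) (x : ℝ) (u : V) :
    ((T.subtree u).filter fun v => 2 ≤ (T.children v).card ∧ x < T.secw w v).card =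
      (if 2 ≤ (T.children u).card ∧ x < T.secw w u then 1 else 0) +
        ∑ c ∈ T.children u,
          ((T.subtree c).filter fun v =>
            2 ≤ (T.children v).card ∧ x < T.secw w v).card := by
  set P : V → Prop := fun v => 2 ≤ (T.children v).card ∧ x < T.secw w v with hP
  rw [T.subtree_eq u, filter_insert]
  have hbi : (((T.children u).biUnion T.subtree).filter P).card =
      ∑ c ∈ T.children u, ((T.subtree c).filter P).card := by
    rw [filter_biUnion]
    exact card_biUnion fun c₁ h1 c₂ h2 hne =>
      (T.subtree_disjoint h1 h2 hne).mono (filter_subset _ _) (filter_subset _ _)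
  split_ifs with h
  · have hnotmem : u ∉ ((T.children u).biUnion T.subtree).filter P := by
      simp only [mem_filter, mem_biUnion]
      rintro ⟨⟨c, hc, hu⟩, -⟩
      exact T.notMem_subtree_child hc hu
    rw [card_insert_of_notMem hnotmem, hbi, add_comm]
  · rw [hbi, zero_add]

lemma RTree.key (T : RTree V) (w : V → ℝ) (hpos : ∀ v, 0 < w v)
    (hsup : ∀ u, ∑ v ∈ T.children u, w v ≤ w u) (x : ℝ) (hx : 0 < x) :
    ∀ N u, (T.subtree u).card ≤ N →
      0 < ((T.subtree u).filter fun v =>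
            2 ≤ (T.children v).card ∧ x < T.secw w v).card →
      x * (((T.subtree u).filter fun v =>
            2 ≤ (T.children v).card ∧ x < T.secw w v).card + 1) < w u := by
  intro N
  induction N with
  | zero =>
    intro u hN hcnt
    exfalso
    have : u ∈ T.subtree u := T.self_mem_subtree u
    have := Finset.card_pos.mpr ⟨u, this⟩
    omega
  | succ N ih =>
    intro u hN hcnt
    set P : V → Prop := fun v => 2 ≤ (T.children v).card ∧ x < T.secw w v with hP
    set g : V → ℕ := fun c => ((T.subtree c).filter P).card with hg
    -- induction hypothesis for children
    have hIH : ∀ c ∈ T.children u, 0 < g c → x * (g c + 1) < w c := by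
      intro c hc hgc
      have hss : T.subtree c ⊂ T.subtree u := by
        rw [Finset.ssubset_def]
        refine ⟨T.subtree_subset hc, fun hsub => ?_⟩
        exact T.notMem_subtree_child hc (hsub (T.self_mem_subtree u))
      have hcard : (T.subtree c).card ≤ N := by
        have := Finset.card_lt_card hss
        omega
      exact ih c hcard hgc
    have hce := T.count_eq w x u
    set e : ℕ := if P u then 1 else 0 with he
    -- find a good witness set D of children
    have H : ∃ D : Finset V, D ⊆ T.children u ∧
        (∀ c ∈ D, x * (g c + 1) < w c) ∧
        (∀ c ∈ T.children u, c ∉ D → g c = 0) ∧ e + 1 ≤ D.card := by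
      by_cases hPu : P u
      · obtain ⟨c₁, hc₁, c₂, hc₂, hne, hw₁, hw₂⟩ := T.exists_two_heavy w hx hPu.2
        refine ⟨insert c₁ (insert c₂ ((T.children u).filter fun c => 0 < g c)),
          ?_, ?_, ?_, ?_⟩
        · intro c hc
          simp only [mem_insert, mem_filter] at hc
          rcases hc with rfl | rfl | ⟨hc, -⟩
          · exact hc₁
          · exact hc₂
          · exact hc
        · intro c hc
          by_cases hgc : 0 < g c
          · simp only [mem_insert, mem_filter] at hc
            rcases hc with rfl | rfl | ⟨hc, -⟩
            · exact hIH _ hc₁ hgc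
            · exact hIH _ hc₂ hgc
            · exact hIH _ hc hgc
          · have hg0 : g c = 0 := by omega
            have hxw : x < w c := by
              simp only [mem_insert, mem_filter] at hc
              rcases hc with rfl | rfl | ⟨-, hc⟩
              · exact hw₁
              · exact hw₂
              · exact absurd hc hgc
            rw [hg0]
            push_cast
            linarith
        · intro c hc hcD
          by_contra hgc
          refine hcD ?_
          simp only [mem_insert, mem_filter]
          exact Or.inr (Or.inr ⟨hc, by omega⟩)
        · have hsub2 : ({c₁, c₂} : Finset V) ⊆
              insert c₁ (insert c₂ ((T.children u).filter fun c => 0 < g c)) := by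
            intro c hc
            simp only [mem_insert, mem_singleton] at hc
            rcases hc with rfl | rfl
            · exact mem_insert_self _ _
            · exact mem_insert_of_mem (mem_insert_self _ _)
          have := Finset.card_le_card hsub2
          rw [Finset.card_pair hne] at this
          have hee : e = 1 := if_pos hPu
          omega
      · refine ⟨(T.children u).filter fun c => 0 < g c, filter_subset _ _, ?_, ?_, ?_⟩
        · intro c hc
          rw [mem_filter] at hc
          exact hIH _ hc.1 hc.2
        · intro c hc hcD
          by_contra hgc
          exact hcD (mem_filter.mpr ⟨hc, by omega⟩)
        · have hee : e = 0 := if_neg hPu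
          have hsum : 0 < ∑ c ∈ T.children u, g c := by
            rw [hce, hee, zero_add] at hcnt
            exact hcnt
          obtain ⟨c, hc, hgc⟩ : ∃ c ∈ T.children u, 0 < g c := by
            by_contra hall
            push_neg at hall
            have : ∑ c ∈ T.children u, g c = 0 :=
              Finset.sum_eq_zero fun c hc => by have := hall c hc; omega
            omega
          have : 0 < ((T.children u).filter fun c => 0 < g c).card :=
            Finset.card_pos.mpr ⟨c, mem_filter.mpr ⟨hc, hgc⟩⟩
          omega
    obtain ⟨D, hDsub, hDlt, hDzero, hDcard⟩ := H
    have hDne : D.Nonempty := Finset.card_pos.mp (by omega)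
    -- the sums agree
    have hsumeq : ∑ c ∈ T.children u, (g c : ℝ) = ∑ c ∈ D, (g c : ℝ) := by
      refine (Finset.sum_subset hDsub ?_).symm
      intro c hc hcD
      rw [hDzero c hc hcD]
      norm_num
    calc x * ((((T.subtree u).filter P).card : ℝ) + 1)
        = x * (∑ c ∈ T.children u, (g c : ℝ)) + x * ((e : ℝ) + 1) := by
          rw [hce]; push_cast; ring
      _ ≤ x * (∑ c ∈ D, (g c : ℝ)) + x * D.card := by
          rw [hsumeq]
          have : (e : ℝ) + 1 ≤ (D.card : ℝ) := by
            exact_mod_cast hDcard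
          nlinarith
      _ = ∑ c ∈ D, x * ((g c : ℝ) + 1) := by
          simp only [mul_add, mul_one, Finset.sum_add_distrib, Finset.sum_const,
            nsmul_eq_mul, Finset.mul_sum]
          ring
      _ < ∑ c ∈ D, w c := Finset.sum_lt_sum_of_nonempty hDne hDlt
      _ ≤ ∑ c ∈ T.children u, w c :=
          Finset.sum_le_sum_of_subset_of_nonneg hDsub
            fun c _ _ => (hpos c).le
      _ ≤ w u := hsup u

open scoped Classical in
/-- Let `T` be a rooted tree with positive weights satisfying
`w(u) ≥ ∑_{v child of u} w(v)`.  Then for any `x > 0`, the number of nodes `u` with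
`secw(u) > x` is less than `w(root)/x`. -/
theorem card_nodes_with_large_secw_lt
    (T : RTree V) (w : V → ℝ) (hpos : ∀ v, 0 < w v)
    (hsup : ∀ u, ∑ v ∈ T.children u, w v ≤ w u)
    (x : ℝ) (hx : 0 < x) :
    ((Finset.univ.filter fun u =>
        2 ≤ (T.children u).card ∧ x < T.secw w u).card : ℝ) < w T.root / x := by
  have hsub : T.subtree T.root = Finset.univ := by
    ext v
    simp only [Finset.mem_univ, iff_true, T.mem_subtree]
    exact T.reaches_root v
  have heq : (Finset.univ.filter fun u =>
      2 ≤ (T.children u).card ∧ x < T.secw w u) =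
      (T.subtree T.root).filter fun u =>
        2 ≤ (T.children u).card ∧ x < T.secw w u := by
    rw [hsub]
  rw [heq]
  set n := ((T.subtree T.root).filter fun u =>
      2 ≤ (T.children u).card ∧ x < T.secw w u).card with hn
  rcases Nat.eq_zero_or_pos n with h0 | hposn
  · rw [h0]
    push_cast
    exact div_pos (hpos T.root) hx
  · have := T.key w hpos hsup x hx (T.subtree T.root).card T.root le_rfl hposn
    rw [lt_div_iff₀ hx]
    rw [← hn] at this
    nlinarith
end

section
/- Let T be a rooted tree with root r and weight function w satisfying w(u) ≥ ∑_{v child of u} w(v), all weights positive integers. Fix x > 0 and let L be the set of nodes u with w(u) > x such that either u is a leaf or all children of u have weight ≤ x. Then the subtrees rooted at nodes of L are pairwise disjoint, and |L| < w(r)/x. -/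
open Finset

variable {V : Type*} [Fintype V] [DecidableEq V]

namespace RTree

open scoped Classical

lemma mem_subtree_s6 {T : RTree V} {u v : V} : v ∈ T.subtree u ↔ ∃ n, T.parent^[n] v = u := by
  simp [RTree.subtree]

lemma mem_children_s6 {T : RTree V} {u v : V} :
    v ∈ T.children u ↔ T.parent v = u ∧ v ≠ u := by
  simp [RTree.children]

lemma self_mem_subtree_s6 (T : RTree V) (u : V) : u ∈ T.subtree u :=
  mem_subtree_s6.mpr ⟨0, rfl⟩

lemma subtree_subset_s6 {T : RTree V} {u v : V} (h : u ∈ T.subtree v) :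
    T.subtree u ⊆ T.subtree v := by
  intro z hz
  obtain ⟨m, hm⟩ := mem_subtree_s6.mp hz
  obtain ⟨n, hn⟩ := mem_subtree_s6.mp h
  exact mem_subtree_s6.mpr ⟨n + m, by rw [Function.iterate_add_apply, hm, hn]⟩

lemma root_notMem_child_subtree {T : RTree V} {r c : V} (hc : c ∈ T.children r) :
    r ∉ T.subtree c := by
  intro hmem
  obtain ⟨n, hn⟩ := mem_subtree_s6.mp hmem
  obtain ⟨hpc, hcr⟩ := mem_children_s6.mp hc
  have hcyc : T.parent^[n + 1] r = r := by
    rw [Function.iterate_succ_apply', hn, hpc]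
  obtain ⟨m, hm⟩ := T.reaches_root r
  have h1 : T.parent^[(n + 1) * m] r = r := by
    rw [Function.iterate_mul]
    exact Function.iterate_fixed hcyc m
  have h2 : T.parent^[(n + 1) * m] r = T.root := by
    have : (n + 1) * m = n * m + m := by ring
    rw [this, Function.iterate_add_apply, hm]
    exact Function.iterate_fixed T.parent_root (n * m)
  have hr : r = T.root := by rw [← h1, h2]
  apply hcr
  rw [← hn, hr]
  exact Function.iterate_fixed T.parent_root n

lemma exists_child_subtree {T : RTree V} {r u : V} (h : u ∈ T.subtree r) (hne : u ≠ r) :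
    ∃ c ∈ T.children r, u ∈ T.subtree c := by
  obtain ⟨n, hn⟩ := mem_subtree_s6.mp h
  have hex : ∃ k, T.parent^[k] u = r := ⟨n, hn⟩
  set k := Nat.find hex with hk
  have hkspec : T.parent^[k] u = r := Nat.find_spec hex
  have hk0 : k ≠ 0 := by
    intro h0
    apply hne
    rw [h0] at hkspec
    exact hkspec
  obtain ⟨j, hj⟩ := Nat.exists_eq_succ_of_ne_zero hk0
  refine ⟨T.parent^[j] u, ?_, mem_subtree_s6.mpr ⟨j, rfl⟩⟩
  refine mem_children_s6.mpr ⟨?_, ?_⟩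
  · have h' := hkspec
    rw [hj, Function.iterate_succ_apply'] at h'
    exact h'
  · intro heq
    exact Nat.find_min hex (by omega : j < k) heq

lemma child_eq_of_le {T : RTree V} {r c d z : V} (hc : c ∈ T.children r)
    (hd : d ∈ T.children r) {m n : ℕ} (hm : T.parent^[m] z = c) (hn : T.parent^[n] z = d)
    (hle : m ≤ n) : c = d := by
  have : T.parent^[n - m] c = d := by
    rw [← hm, ← Function.iterate_add_apply]
    rw [(by omega : n - m + m = n)]
    exact hn
  rcases Nat.eq_zero_or_pos (n - m) with h0 | hpos
  · rw [h0] at this; exact this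
  · exfalso
    obtain ⟨j, hj⟩ := Nat.exists_eq_succ_of_ne_zero (Nat.pos_iff_ne_zero.mp hpos)
    rw [hj, Function.iterate_succ_apply, (mem_children_s6.mp hc).1] at this
    exact root_notMem_child_subtree hd (mem_subtree_s6.mpr ⟨j, this⟩)

lemma children_subtree_disjoint {T : RTree V} {r c d : V} (hc : c ∈ T.children r)
    (hd : d ∈ T.children r) (hne : c ≠ d) : Disjoint (T.subtree c) (T.subtree d) := by
  rw [Finset.disjoint_left]
  intro z hzc hzd
  obtain ⟨m, hm⟩ := mem_subtree_s6.mp hzc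
  obtain ⟨n, hn⟩ := mem_subtree_s6.mp hzd
  rcases le_total m n with h | h
  · exact hne (child_eq_of_le hc hd hm hn h)
  · exact hne (child_eq_of_le hd hc hn hm h).symm

lemma weight_le_parent {T : RTree V} {w : V → ℕ}
    (hsup : ∀ u, ∑ v ∈ T.children u, w v ≤ w u) (v : V) : w v ≤ w (T.parent v) := by
  by_cases h : v = T.parent v
  · rw [← h]
  · calc w v ≤ ∑ u ∈ T.children (T.parent v), w u :=
          Finset.single_le_sum (fun _ _ => Nat.zero_le _)
            (mem_children_s6.mpr ⟨rfl, h⟩)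
      _ ≤ w (T.parent v) := hsup _

lemma weight_le_ancestor {T : RTree V} {w : V → ℕ}
    (hsup : ∀ u, ∑ v ∈ T.children u, w v ≤ w u) {u v : V} (h : v ∈ T.subtree u) :
    w v ≤ w u := by
  obtain ⟨n, hn⟩ := mem_subtree_s6.mp h
  rw [← hn]
  clear hn
  induction n with
  | zero => exact le_refl _
  | succ n ih =>
      rw [Function.iterate_succ_apply']
      exact ih.trans (weight_le_parent hsup _)

lemma subtree_card_lt {T : RTree V} {r c : V} (hc : c ∈ T.children r) :
    (T.subtree c).card < (T.subtree r).card := by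
  apply Finset.card_lt_card
  constructor
  · exact subtree_subset_s6 (mem_subtree_s6.mpr ⟨1, by simpa using (mem_children_s6.mp hc).1⟩)
  · intro hsub
    exact root_notMem_child_subtree hc (hsub (self_mem_subtree_s6 T r))

lemma sum_bound {T : RTree V} {w : V → ℕ}
    (hsup : ∀ u, ∑ v ∈ T.children u, w v ≤ w u) :
    ∀ n (r : V) (S : Finset V), (T.subtree r).card ≤ n →
      (∀ u ∈ S, u ∈ T.subtree r) →
      (∀ u ∈ S, ∀ v ∈ S, u ≠ v → Disjoint (T.subtree u) (T.subtree v)) →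
      ∑ u ∈ S, w u ≤ w r := by
  intro n
  induction n with
  | zero =>
      intro r S hcard _ _
      exact absurd (Finset.card_pos.mpr ⟨r, self_mem_subtree_s6 T r⟩) (by omega)
  | succ n ih =>
      intro r S hcard hmem hdisj
      by_cases hr : r ∈ S
      · have hS : S = {r} := by
          apply Finset.eq_singleton_iff_unique_mem.mpr
          refine ⟨hr, fun u hu => ?_⟩
          by_contra hne
          have := hdisj u hu r hr hne
          exact (Finset.disjoint_left.mp this (self_mem_subtree_s6 T u)) (hmem u hu)
        rw [hS, Finset.sum_singleton]
      · have hsubset : S ⊆ (T.children r).biUnion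
            (fun c => S.filter (· ∈ T.subtree c)) := by
          intro u hu
          obtain ⟨c, hc, huc⟩ := exists_child_subtree (hmem u hu)
            (fun h => hr (h ▸ hu))
          exact Finset.mem_biUnion.mpr ⟨c, hc, Finset.mem_filter.mpr ⟨hu, huc⟩⟩
        have hdisjfam : ∀ c1 ∈ T.children r, ∀ c2 ∈ T.children r, c1 ≠ c2 →
            Disjoint (S.filter (· ∈ T.subtree c1)) (S.filter (· ∈ T.subtree c2)) := by
          intro c1 h1 c2 h2 hne
          exact (children_subtree_disjoint h1 h2 hne).mono
            (fun z hz => (Finset.mem_filter.mp hz).2)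
            (fun z hz => (Finset.mem_filter.mp hz).2)
        calc ∑ u ∈ S, w u
            ≤ ∑ u ∈ (T.children r).biUnion (fun c => S.filter (· ∈ T.subtree c)), w u :=
              Finset.sum_le_sum_of_subset hsubset
          _ = ∑ c ∈ T.children r, ∑ u ∈ S.filter (· ∈ T.subtree c), w u :=
              Finset.sum_biUnion hdisjfam
          _ ≤ ∑ c ∈ T.children r, w c := by
              apply Finset.sum_le_sum
              intro c hc
              apply ih c _ (by have := subtree_card_lt hc; omega)
              · intro u hu; exact (Finset.mem_filter.mp hu).2
              · intro u hu v hv hne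
                exact hdisj u (Finset.mem_filter.mp hu).1 v (Finset.mem_filter.mp hv).1 hne
          _ ≤ w r := hsup r

end RTree

open scoped Classical in
/-- Let `T` be a rooted tree with positive integer weights satisfying
`w(u) ≥ ∑_{v child of u} w(v)`.  Fix `x > 0` and let `L` be the set of nodes `u` with
`w(u) > x` such that either `u` is a leaf or all children of `u` have weight `≤ x`.
Then the subtrees rooted at the nodes of `L` are pairwise disjoint and `|L| < w(root)/x`. -/
theorem subtrees_disjoint_and_card_lt
    (T : RTree V) (w : V → ℕ) (hpos : ∀ v, 0 < w v)
    (hsup : ∀ u, ∑ v ∈ T.children u, w v ≤ w u)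
    (x : ℝ) (hx : 0 < x)
    (L : Finset V)
    (hLdef : L = Finset.univ.filter fun u =>
      x < (w u : ℝ) ∧ (T.children u = ∅ ∨ ∀ v ∈ T.children u, (w v : ℝ) ≤ x)) :
    (∀ u ∈ L, ∀ v ∈ L, u ≠ v → Disjoint (T.subtree u) (T.subtree v)) ∧
    (L.card : ℝ) < (w T.root : ℝ) / x := by
  have hLmem : ∀ u ∈ L, x < (w u : ℝ) ∧
      (T.children u = ∅ ∨ ∀ v ∈ T.children u, (w v : ℝ) ≤ x) := by
    intro u hu
    rw [hLdef] at hu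
    exact (Finset.mem_filter.mp hu).2
  -- key asymmetric lemma
  have key : ∀ u ∈ L, ∀ v ∈ L, ∀ z : V, ∀ m n : ℕ,
      T.parent^[m] z = u → T.parent^[n] z = v → m ≤ n → u = v := by
    intro u hu v hv z m n hm hn hle
    have huv : u ∈ T.subtree v := by
      refine RTree.mem_subtree_s6.mpr ⟨n - m, ?_⟩
      rw [← hm, ← Function.iterate_add_apply, (by omega : n - m + m = n)]
      exact hn
    by_contra hne
    obtain ⟨c, hc, huc⟩ := RTree.exists_child_subtree huv hne
    obtain ⟨hxv, hch⟩ := hLmem v hv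
    rcases hch with hemp | hall
    · rw [hemp] at hc; exact absurd hc (Finset.notMem_empty c)
    · have h1 : (w u : ℝ) ≤ (w c : ℝ) := by
        exact_mod_cast RTree.weight_le_ancestor hsup huc
      have h2 := hall c hc
      have h3 := (hLmem u hu).1
      linarith
  have hdisj : ∀ u ∈ L, ∀ v ∈ L, u ≠ v → Disjoint (T.subtree u) (T.subtree v) := by
    intro u hu v hv hne
    rw [Finset.disjoint_left]
    intro z hzu hzv
    obtain ⟨m, hm⟩ := RTree.mem_subtree_s6.mp hzu
    obtain ⟨n, hn⟩ := RTree.mem_subtree_s6.mp hzv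
    rcases le_total m n with h | h
    · exact hne (key u hu v hv z m n hm hn h)
    · exact hne (key v hv u hu z n m hn hm h).symm
  refine ⟨hdisj, ?_⟩
  have hsum : ∑ u ∈ L, w u ≤ w T.root := by
    apply RTree.sum_bound hsup (T.subtree T.root).card T.root L (le_refl _)
    · intro u _
      obtain ⟨n, hn⟩ := T.reaches_root u
      exact RTree.mem_subtree_s6.mpr ⟨n, hn⟩
    · exact hdisj
  rw [lt_div_iff₀ hx]
  rcases L.eq_empty_or_nonempty with hL | hL
  · simp only [hL, Finset.card_empty, Nat.cast_zero, zero_mul]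
    exact_mod_cast hpos T.root
  · have h1 : (L.card : ℝ) * x = ∑ _u ∈ L, x := by
      rw [Finset.sum_const, nsmul_eq_mul]
    have h2 : ∑ _u ∈ L, x < ∑ u ∈ L, (w u : ℝ) :=
      Finset.sum_lt_sum_of_nonempty hL (fun u hu => (hLmem u hu).1)
    have h3 : ∑ u ∈ L, (w u : ℝ) ≤ (w T.root : ℝ) := by
      exact_mod_cast hsum
    linarith
end

section
/- Let G = (X, Y, E) be a weighted bipartite graph and H ⊆ X with |H| = h. Let E' be the edges of G − H and Y' the endpoints in Y of edges in E'. For each x_i ∈ H, let E_i be the union of { (x_i, y) : y ∈ Y' } and the h heaviest edges (x_i, y) with y ∉ Y'. Then E' ∪ E₁ ∪ ⋯ ∪ E_h contains a maximum weight matching of G, and |E' ∪ E₁ ∪ ⋯ ∪ E_h| = O(h·|E'| + h²). -/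
open Finset

/-!
A maximum weight matching `M` that uses an edge `e = (x, y)` outside the sparsifier has
`x ∈ H`, `y ∉ Y'`, and `e` lighter than each of the `h` kept edges of `x` towards `Y \ Y'`.
Every edge of `M` ending outside `Y'` starts in `H`, so besides `e` at most `h - 1` of them
exist; hence one of the `h` kept edges of `x` ends at a vertex of `Y` that `M` leaves free.
Swapping `e` for it keeps `M` a matching of no smaller weight and lowers the number of
edges outside the sparsifier, so repeating the swap ends in a maximum weight matching
inside the sparsifier.
-/

section

variable {α X Y β : Type*}

theorem Set.injOn_snd_of_fst_eq {S : Set (X × Y)} {x : X} (hS : ∀ e ∈ S, e.1 = x) :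
    Set.InjOn Prod.snd S :=
  fun a ha b hb hab => Prod.ext ((hS a ha).trans (hS b hb).symm) hab

theorem card_le_card_add_card_filter_snd_notMem [DecidableEq Y] {S : Finset (X × Y)} {x : X}
    (hS : ∀ e ∈ S, e.1 = x) (Y' : Finset Y) :
    #S ≤ #Y' + #(S.filter (·.2 ∉ Y')) := by
  rw [← card_filter_add_card_filter_not (p := (·.2 ∈ Y'))]
  gcongr
  exact card_le_card_of_injOn Prod.snd (fun e he => (mem_filter.1 he).2)
    (Set.injOn_snd_of_fst_eq fun e he => hS e (mem_filter.1 he).1)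

theorem exists_subset_of_exists_card_sdiff_lt [DecidableEq α] [Preorder β]
    {P : Finset α → Prop} {W : Finset α → β} {T : Finset α}
    (hstep : ∀ M, P M → (M \ T).Nonempty → ∃ M', P M' ∧ W M ≤ W M' ∧ #(M' \ T) < #(M \ T))
    {M : Finset α} (hM : P M) : ∃ M' ⊆ T, P M' ∧ W M ≤ W M' := by
  induction hn : #(M \ T) using Nat.strong_induction_on generalizing M with
  | _ n ih =>
    rcases (M \ T).eq_empty_or_nonempty with hMT | hMT
    · exact ⟨M, sdiff_eq_empty_iff_subset.1 hMT, hM, le_rfl⟩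
    · obtain ⟨M', hM', hWM', hlt⟩ := hstep M hM hMT
      obtain ⟨M'', hM''T, hM'', hWM''⟩ := ih _ (hn ▸ hlt) hM' rfl
      exact ⟨M'', hM''T, hM'', hWM'.trans hWM''⟩

theorem card_insert_erase_sdiff_lt [DecidableEq α] {M T : Finset α} {e f : α}
    (he : e ∈ M \ T) (hf : f ∈ T) : #(insert f (M.erase e) \ T) < #(M \ T) := by
  rw [insert_sdiff_of_mem _ hf, erase_sdiff_comm]
  exact card_erase_lt_of_mem he

theorem exists_isMatching_forall_sum_le [AddCommMonoid β] [LinearOrder β]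
    (E : Finset (X × Y)) (w : X × Y → β) :
    ∃ M ⊆ E, IsMatching M ∧ ∀ M' ⊆ E, IsMatching M' → ∑ e ∈ M', w e ≤ ∑ e ∈ M, w e := by
  classical
  obtain ⟨M, hM, hmax⟩ := (E.powerset.filter IsMatching).exists_max_image (∑ e ∈ ·, w e)
    ⟨∅, mem_filter.2 ⟨empty_mem_powerset E, by simp [IsMatching]⟩⟩
  simp only [mem_filter, mem_powerset] at hM hmax
  exact ⟨M, hM.1, hM.2, fun M' hM'E hM' => hmax M' ⟨hM'E, hM'⟩⟩

namespace IsMatching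

theorem card_filter_le [DecidableEq X] {M : Finset (X × Y)} (hM : IsMatching M)
    {p : X × Y → Prop} [DecidablePred p] {H : Finset X} (hH : ∀ m ∈ M, p m → m.1 ∈ H) :
    #(M.filter p) ≤ #H := by
  refine card_le_card_of_injOn Prod.fst (fun m hm => hH m (mem_filter.1 hm).1 (mem_filter.1 hm).2) ?_
  intro a ha b hb hab
  by_contra hne
  exact (hM a (mem_filter.1 ha).1 b (mem_filter.1 hb).1 hne).1 hab

theorem insert_erase [DecidableEq X] [DecidableEq Y] {M : Finset (X × Y)} (hM : IsMatching M)
    {e f : X × Y} (he : e ∈ M) (hfst : f.1 = e.1) (hsnd : ∀ m ∈ M, m ≠ e → m.2 ≠ f.2) :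
    IsMatching (insert f (M.erase e)) := by
  have hfree : ∀ m ∈ M.erase e, m.1 ≠ f.1 ∧ m.2 ≠ f.2 := fun m hm =>
    have ⟨hme, hmM⟩ := mem_erase.1 hm
    ⟨hfst ▸ (hM m hmM e he hme).1, hsnd m hmM hme⟩
  intro a ha b hb hab
  rcases mem_insert.1 ha with rfl | ha' <;> rcases mem_insert.1 hb with rfl | hb'
  · exact absurd rfl hab
  · exact (hfree b hb').imp Ne.symm Ne.symm
  · exact hfree a ha'
  · exact hM a (mem_of_mem_erase ha') b (mem_of_mem_erase hb') hab

theorem exists_swap [DecidableEq X] [DecidableEq Y] [AddCommMonoid β] [PartialOrder β]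
    [IsOrderedAddMonoid β] {M : Finset (X × Y)} (hM : IsMatching M) {e : X × Y} (he : e ∈ M)
    {Y' : Finset Y} (heY' : e.2 ∉ Y') {F : Finset (X × Y)}
    (hF : ∀ f ∈ F, f.1 = e.1 ∧ f.2 ∉ Y') (hcard : #(M.filter (·.2 ∉ Y')) ≤ #F)
    {w : X × Y → β} (hw : ∀ f ∈ F, w e ≤ w f) :
    ∃ f ∈ F, IsMatching (insert f (M.erase e)) ∧
      ∑ m ∈ M, w m ≤ ∑ m ∈ insert f (M.erase e), w m := by
  set B := (M.filter (·.2 ∉ Y')).erase e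
  have heB : e ∈ M.filter (·.2 ∉ Y') := mem_filter.2 ⟨he, heY'⟩
  have hlt : #(B.image Prod.snd) < #(F.image Prod.snd) := by
    rw [card_image_of_injOn (Set.injOn_snd_of_fst_eq fun f hf => (hF f hf).1)]
    exact card_image_le.trans_lt ((card_erase_lt_of_mem heB).trans_le hcard)
  obtain ⟨_, hyF, hyB⟩ := exists_mem_notMem_of_card_lt_card hlt
  obtain ⟨f, hf, rfl⟩ := mem_image.1 hyF
  have hsnd : ∀ m ∈ M, m ≠ e → m.2 ≠ f.2 := fun m hm hme hmf =>
    hyB (mem_image.2 ⟨m, mem_erase.2 ⟨hme, mem_filter.2 ⟨hm, hmf ▸ (hF f hf).2⟩⟩, hmf⟩)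
  have hfM : f ∉ M.erase e := fun hfM =>
    hsnd f (mem_of_mem_erase hfM) (ne_of_mem_erase hfM) rfl
  refine ⟨f, hf, hM.insert_erase he (hF f hf).1 hsnd, ?_⟩
  rw [sum_insert hfM, ← add_sum_erase M w he]
  exact add_le_add_left (hw f hf) _

end IsMatching

theorem card_union_biUnion_le [DecidableEq X] [DecidableEq Y] {E' : Finset (X × Y)}
    {Y' : Finset Y} (hY' : #Y' ≤ #E') {H : Finset X} {S : X → Finset (X × Y)}
    (hS : ∀ x ∈ H, (∀ e ∈ S x, e.1 = x) ∧ #((S x).filter (·.2 ∉ Y')) ≤ #H) :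
    #(E' ∪ H.biUnion S) ≤ (#H + 1) * #E' + #H ^ 2 :=
  calc #(E' ∪ H.biUnion S)
      _ ≤ #E' + #(H.biUnion S) := card_union_le _ _
      _ ≤ #E' + #H * (#E' + #H) := by
        gcongr
        exact card_biUnion_le_card_mul H S _ fun x hx =>
          (card_le_card_add_card_filter_snd_notMem (hS x hx).1 Y').trans
            (add_le_add hY' (hS x hx).2)
      _ = (#H + 1) * #E' + #H ^ 2 := by ring

theorem exists_isMatching_card_sdiff_lt [DecidableEq X] [DecidableEq Y] [AddCommMonoid β]
    [PartialOrder β] [IsOrderedAddMonoid β] {E : Finset (X × Y)} {w : X × Y → β}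
    {H : Finset X} {Y' : Finset Y} {S : X → Finset (X × Y)}
    (hY' : ∀ e ∈ E, e.1 ∉ H → e.2 ∈ Y')
    (hSsub : ∀ x ∈ H, S x ⊆ E.filter (fun e => e.1 = x))
    (hSY' : ∀ x ∈ H, ∀ e ∈ E, e.1 = x → e.2 ∈ Y' → e ∈ S x)
    (hScard : ∀ x ∈ H, #((S x).filter (fun e => e.2 ∉ Y')) =
      min #H #(E.filter (fun e => e.1 = x ∧ e.2 ∉ Y')))
    (hSheavy : ∀ x ∈ H, ∀ e ∈ (S x).filter (fun e => e.2 ∉ Y'),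
      ∀ f ∈ E.filter (fun e => e.1 = x ∧ e.2 ∉ Y'), f ∉ S x → w f ≤ w e)
    (M : Finset (X × Y)) (hM : M ⊆ E ∧ IsMatching M)
    (hMT : (M \ (E.filter (fun e => e.1 ∉ H) ∪ H.biUnion S)).Nonempty) :
    ∃ M', (M' ⊆ E ∧ IsMatching M') ∧ ∑ e ∈ M, w e ≤ ∑ e ∈ M', w e ∧
      #(M' \ (E.filter (fun e => e.1 ∉ H) ∪ H.biUnion S)) <
        #(M \ (E.filter (fun e => e.1 ∉ H) ∪ H.biUnion S)) := by
  obtain ⟨hME, hM⟩ := hM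
  obtain ⟨e, he⟩ := hMT
  obtain ⟨heM, heT⟩ := mem_sdiff.1 he
  have heE := hME heM
  have hxH : e.1 ∈ H := by
    by_contra hx
    exact heT (mem_union_left _ (mem_filter.2 ⟨heE, hx⟩))
  have heS : e ∉ S e.1 := fun heS => heT (mem_union_right _ (mem_biUnion.2 ⟨_, hxH, heS⟩))
  have heY' : e.2 ∉ Y' := fun heY' => heS (hSY' _ hxH e heE rfl heY')
  have hSx : ∀ f ∈ S e.1, f ∈ E ∧ f.1 = e.1 := fun f hf => mem_filter.1 (hSsub _ hxH hf)
  set F := (S e.1).filter (fun e => e.2 ∉ Y')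
  set C := E.filter (fun f => f.1 = e.1 ∧ f.2 ∉ Y')
  have hFC : #F < #C := card_lt_card ⟨fun f hf => mem_filter.2
    ⟨(hSx f (mem_filter.1 hf).1).1, (hSx f (mem_filter.1 hf).1).2, (mem_filter.1 hf).2⟩,
    fun hCF => heS (mem_filter.1 (hCF (mem_filter.2 ⟨heE, rfl, heY'⟩))).1⟩
  have hF : #F = #H := by
    have : #F = min #H #C := hScard e.1 hxH
    omega
  have hMY' : #(M.filter (·.2 ∉ Y')) ≤ #H := hM.card_filter_le fun m hm hmY' => by
    by_contra hmH
    exact hmY' (hY' m (hME hm) hmH)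
  obtain ⟨f, hfF, hM', hw⟩ := hM.exists_swap heM heY' (F := F)
    (fun f hf => ⟨(hSx f (mem_filter.1 hf).1).2, (mem_filter.1 hf).2⟩) (hF ▸ hMY')
    (fun f hf => hSheavy e.1 hxH f hf e (mem_filter.2 ⟨heE, rfl, heY'⟩) heS)
  refine ⟨_, ⟨insert_subset (hSx f (mem_filter.1 hfF).1).1 ((erase_subset _ _).trans hME), hM'⟩,
    hw, card_insert_erase_sdiff_lt he ?_⟩
  exact mem_union_right _ (mem_biUnion.2 ⟨_, hxH, (mem_filter.1 hfF).1⟩)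

end

theorem sparsification_removing_dominating_nodes_general
    {X Y : Type*} [DecidableEq X] [DecidableEq Y]
    (E : Finset (X × Y)) (w : X × Y → ℝ)
    (H : Finset X) (h : ℕ) (hh : H.card = h)
    (E' : Finset (X × Y)) (hE' : E' = E.filter (fun e => e.1 ∉ H))
    (Y' : Finset Y) (hY' : Y' = E'.image Prod.snd)
    (S : X → Finset (X × Y))
    (hSsub : ∀ x ∈ H, S x ⊆ E.filter (fun e => e.1 = x))
    (hSY' : ∀ x ∈ H, ∀ e ∈ E, e.1 = x → e.2 ∈ Y' → e ∈ S x)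
    (hScard : ∀ x ∈ H, ((S x).filter (fun e => e.2 ∉ Y')).card =
      min h ((E.filter (fun e => e.1 = x ∧ e.2 ∉ Y')).card)
    )
    (hSheavy : ∀ x ∈ H, ∀ e ∈ (S x).filter (fun e => e.2 ∉ Y'),
      ∀ f ∈ E.filter (fun e => e.1 = x ∧ e.2 ∉ Y'), f ∉ S x → w f ≤ w e) :
    (E' ∪ H.biUnion S).card ≤ (h + 1) * E'.card + h ^ 2 ∧
    ∃ M ⊆ E' ∪ H.biUnion S, IsMatching M ∧
      ∀ M' ⊆ E, IsMatching M' → ∑ e ∈ M', w e ≤ ∑ e ∈ M, w e := by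
  subst hh hE'
  have hY'E : ∀ e ∈ E, e.1 ∉ H → e.2 ∈ Y' := fun e he hx =>
    hY' ▸ mem_image_of_mem _ (mem_filter.2 ⟨he, hx⟩)
  refine ⟨card_union_biUnion_le (hY' ▸ card_image_le) fun x hx =>
    ⟨fun e he => (mem_filter.1 (hSsub x hx he)).2, (hScard x hx).trans_le (min_le_left _ _)⟩, ?_⟩
  obtain ⟨M₀, hM₀E, hM₀, hmax⟩ := exists_isMatching_forall_sum_le E w
  obtain ⟨M, hMT, ⟨-, hM⟩, hle⟩ := exists_subset_of_exists_card_sdiff_lt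
    (exists_isMatching_card_sdiff_lt hY'E hSsub hSY' hScard hSheavy) ⟨hM₀E, hM₀⟩
  exact ⟨M, hMT, hM, fun M' hM'E hM' => (hmax M' hM'E hM').trans hle⟩

/-- Let `G = (X,Y,E)` be a weighted bipartite graph and `H ⊆ X` with `|H| = h`.
Let `E'` be the edges of `G − H` and `Y'` the `Y`-endpoints of edges in `E'`.
For each `x ∈ H`, let `S x` consist of all edges `(x,y)` with `y ∈ Y'` together with the
`h` heaviest edges `(x,y)` with `y ∉ Y'`.  Then `E' ∪ ⋃_{x ∈ H} S x` contains a maximum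
weight matching of `G`, and it has at most `(h+1)·|E'| + h²` edges, i.e. `O(h|E'| + h²)`. -/
theorem sparsification_removing_dominating_nodes
    {X Y : Type*} [Fintype X] [Fintype Y] [DecidableEq X] [DecidableEq Y]
    (E : Finset (X × Y)) (w : X × Y → ℝ) (hw : ∀ e ∈ E, 0 < w e)
    (H : Finset X) (h : ℕ) (hh : H.card = h)
    (E' : Finset (X × Y)) (hE' : E' = E.filter (fun e => e.1 ∉ H))
    (Y' : Finset Y) (hY' : Y' = E'.image Prod.snd)
    (S : X → Finset (X × Y))
    (hSsub : ∀ x ∈ H, S x ⊆ E.filter (fun e => e.1 = x))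
    (hSY' : ∀ x ∈ H, ∀ e ∈ E, e.1 = x → e.2 ∈ Y' → e ∈ S x)
    (hScard : ∀ x ∈ H, ((S x).filter (fun e => e.2 ∉ Y')).card =
      min h ((E.filter (fun e => e.1 = x ∧ e.2 ∉ Y')).card)
    )
    (hSheavy : ∀ x ∈ H, ∀ e ∈ (S x).filter (fun e => e.2 ∉ Y'),
      ∀ f ∈ E.filter (fun e => e.1 = x ∧ e.2 ∉ Y'), f ∉ S x → w f ≤ w e) :
    (E' ∪ H.biUnion S).card ≤ (h + 1) * E'.card + h ^ 2 ∧
    ∃ M ⊆ E' ∪ H.biUnion S, IsMatching M ∧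
      ∀ M' ⊆ E, IsMatching M' → ∑ e ∈ M', w e ≤ ∑ e ∈ M, w e :=
  sparsification_removing_dominating_nodes_general E w H h hh E' hE' Y' hY' S hSsub hSY' hScard
    hSheavy
end
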